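/- Let p > q ≥ 1 be coprime integers. Let (e_1, …, e_k) be a list of integers with each e_i ≥ 2 whose Hirzebruch–Jung continued fraction value equals p/q, and let (e'_1, …, e'_{k'}) be a list of integers with each e'_j ≥ 2 whose Hirzebruch–Jung continued fraction value equals p/(p−q). Then k' = 1 + ∑_{i=1}^{k} (e_i − 2); equivalently, setting e = 3 + ∑_{i=1}^{k}(e_i − 2) (the embedding dimension of the cyclic quotient singularity), one has k' = e − 2. -/

import Mathlib

/-!
Put `x = p/q` and `x' = p/(p - q)`, so that duality is the symmetric relation
`(x - 1)(x' - 1) = 1`. An expansion with entries `≥ 2` has value in `(e_1 - 1, e_1]`.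
If `e_1 ≥ 3` then `x > 2`, hence `x' < 2` and `e'_1 = 2`; dropping `e'_1` and lowering `e_1`
by one yields the dual pair of values `x - 1` and `(x - 1)/(x - 2)`, and lowers both `k'` and
`∑ (e_i - 2)` by one. The case `e'_1 ≥ 3` is symmetric, and when `e_1 = e'_1 = 2` the relation
forces `x = x' = 2`, i.e. both expansions are `[2]`.
-/

/-- The Hirzebruch–Jung continued fraction `[e_1, …, e_k] = e_1 − 1/[e_2, …, e_k]`,
with `[e_k] = e_k` (junk value `1` on the empty list). -/
def hjcf : List ℚ → ℚ
  | [] => 1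
  | [e] => e
  | e :: f :: rest => e - 1 / hjcf (f :: rest)

theorem hjcf_cons_of_ne_nil (e : ℚ) {L : List ℚ} (hL : L ≠ []) :
    hjcf (e :: L) = e - 1 / hjcf L := by
  obtain ⟨f, r, rfl⟩ := List.exists_cons_of_ne_nil hL
  rfl

theorem hjcf_cons_sub (e c : ℚ) (L : List ℚ) : hjcf ((e - c) :: L) = hjcf (e :: L) - c := by
  rcases L with _ | ⟨f, r⟩
  · rfl
  · simp only [hjcf]; ring

theorem sub_one_lt_hjcf_cons {e : ℚ} {L : List ℚ} (h2 : ∀ x ∈ e :: L, 2 ≤ x) :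
    e - 1 < hjcf (e :: L) := by
  induction L generalizing e with
  | nil => simp [hjcf]
  | cons f L ih =>
    have hf : 2 ≤ f := h2 f (by simp)
    have hL : 1 < hjcf (f :: L) := by
      linarith [ih fun x hx => h2 x (List.mem_cons_of_mem e hx)]
    rw [hjcf_cons_of_ne_nil e (List.cons_ne_nil f L)]
    have : 1 / hjcf (f :: L) < 1 := (div_lt_one (by linarith)).2 hL
    linarith

theorem one_lt_hjcf {L : List ℚ} (hL : L ≠ []) (h2 : ∀ x ∈ L, 2 ≤ x) : 1 < hjcf L := by
  obtain ⟨e, R, rfl⟩ := List.exists_cons_of_ne_nil hL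
  linarith [sub_one_lt_hjcf_cons h2, h2 e List.mem_cons_self]

theorem hjcf_cons_lt {e : ℚ} {L : List ℚ} (hL : L ≠ []) (h2 : ∀ x ∈ L, 2 ≤ x) :
    hjcf (e :: L) < e := by
  rw [hjcf_cons_of_ne_nil e hL]
  have : 0 < 1 / hjcf L := one_div_pos.2 (by linarith [one_lt_hjcf hL h2])
  linarith

theorem hjcf_cons_le {e : ℚ} {L : List ℚ} (h2 : ∀ x ∈ L, 2 ≤ x) : hjcf (e :: L) ≤ e := by
  by_cases hL : L = []
  · subst hL; rfl
  · exact (hjcf_cons_lt hL h2).le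

def hjcfInt (E : List ℤ) : ℚ := hjcf (E.map (fun x : ℤ => (x : ℚ)))

theorem two_le_of_mem_map_cast {E : List ℤ} (h2 : ∀ x ∈ E, 2 ≤ x) :
    ∀ y ∈ E.map (fun x : ℤ => (x : ℚ)), 2 ≤ y := by
  simpa using fun x hx => (Int.cast_le (R := ℚ)).2 (h2 x hx)

theorem one_lt_hjcfInt {E : List ℤ} (hE : E ≠ []) (h2 : ∀ x ∈ E, 2 ≤ x) : 1 < hjcfInt E :=
  one_lt_hjcf (by simpa using hE) (two_le_of_mem_map_cast h2)

theorem sub_one_lt_hjcfInt_cons {e : ℤ} {R : List ℤ} (h2 : ∀ x ∈ e :: R, 2 ≤ x) :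
    (e : ℚ) - 1 < hjcfInt (e :: R) :=
  sub_one_lt_hjcf_cons (two_le_of_mem_map_cast h2)

theorem hjcfInt_cons_le (e : ℤ) {R : List ℤ} (h2 : ∀ x ∈ R, 2 ≤ x) : hjcfInt (e :: R) ≤ e :=
  hjcf_cons_le (two_le_of_mem_map_cast h2)

theorem hjcfInt_cons_lt (e : ℤ) {R : List ℤ} (hR : R ≠ []) (h2 : ∀ x ∈ R, 2 ≤ x) :
    hjcfInt (e :: R) < e :=
  hjcf_cons_lt (by simpa using hR) (two_le_of_mem_map_cast h2)

theorem dual_cons_of_three_le {e e' : ℤ} {R R' : List ℤ} (he : 3 ≤ e)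
    (h2 : ∀ x ∈ e :: R, 2 ≤ x) (h2' : ∀ x ∈ e' :: R', 2 ≤ x)
    (hdual : (hjcfInt (e :: R) - 1) * (hjcfInt (e' :: R') - 1) = 1) :
    e' = 2 ∧ R' ≠ [] ∧ (hjcfInt ((e - 1) :: R) - 1) * (hjcfInt R' - 1) = 1 := by
  set x := hjcfInt (e :: R) with hx
  set x' := hjcfInt (e' :: R') with hx'
  have hx2 : 2 < x := by
    have : (e : ℚ) - 1 < x := sub_one_lt_hjcfInt_cons h2
    have : (3 : ℚ) ≤ e := by exact_mod_cast he
    linarith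
  have hx'1 : 1 < x' := one_lt_hjcfInt (List.cons_ne_nil e' R') h2'
  have hx'2 : x' < 2 := by nlinarith
  have he' : e' = 2 := by
    have : (e' : ℚ) - 1 < x' := sub_one_lt_hjcfInt_cons h2'
    have : e' < 3 := by exact_mod_cast (by linarith : (e' : ℚ) < 3)
    have := h2' e' List.mem_cons_self
    omega
  subst he'
  have hR' : R' ≠ [] := by
    rintro rfl
    simp [hx', hjcfInt, hjcf] at hx'2
  refine ⟨rfl, hR', ?_⟩
  have hx'_eq : x' = 2 - 1 / hjcfInt R' := by
    simp only [hx', hjcfInt, List.map_cons]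
    exact_mod_cast hjcf_cons_of_ne_nil 2 (by simpa using hR')
  have hx1 : hjcfInt ((e - 1) :: R) = x - 1 := by
    simp only [hx, hjcfInt, List.map_cons, Int.cast_sub, Int.cast_one]
    exact hjcf_cons_sub _ _ _
  have hR'1 : 1 < hjcfInt R' := one_lt_hjcfInt hR' fun y hy => h2' y (List.mem_cons_of_mem 2 hy)
  rw [hx1]
  rw [hx'_eq] at hdual
  field_simp at hdual
  linear_combination hdual

/-- Both identities are carried along because the induction may exchange the two expansions. -/
def LengthsDual (E E' : List ℤ) : Prop :=
  (E'.length : ℤ) = 1 + (E.map (· - 2)).sum ∧ (E.length : ℤ) = 1 + (E'.map (· - 2)).sum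

theorem LengthsDual.symm {E E' : List ℤ} (h : LengthsDual E E') : LengthsDual E' E :=
  And.symm h

theorem LengthsDual.cons_two {e : ℤ} {R S : List ℤ} (h : LengthsDual ((e - 1) :: R) S) :
    LengthsDual (e :: R) (2 :: S) := by
  simp only [LengthsDual, List.length_cons, List.map_cons, List.sum_cons] at h ⊢
  omega

theorem eq_nil_of_dual_two_two {R R' : List ℤ}
    (h2 : ∀ x ∈ 2 :: R, 2 ≤ x) (h2' : ∀ x ∈ 2 :: R', 2 ≤ x)
    (hdual : (hjcfInt (2 :: R) - 1) * (hjcfInt (2 :: R') - 1) = 1) : R = [] := by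
  have hx1 := one_lt_hjcfInt (List.cons_ne_nil 2 R) h2
  have hx'1 := one_lt_hjcfInt (List.cons_ne_nil 2 R') h2'
  have hx'2 := hjcfInt_cons_le 2 fun x hx => h2' x (List.mem_cons_of_mem 2 hx)
  by_contra hR
  have hx2 := hjcfInt_cons_lt 2 hR fun x hx => h2 x (List.mem_cons_of_mem 2 hx)
  push_cast at hx'2 hx2
  nlinarith

theorem lengthsDual_of_dual (E E' : List ℤ) (hE : E ≠ []) (hE' : E' ≠ [])
    (h2 : ∀ x ∈ E, 2 ≤ x) (h2' : ∀ x ∈ E', 2 ≤ x)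
    (hdual : (hjcfInt E - 1) * (hjcfInt E' - 1) = 1) : LengthsDual E E' := by
  obtain ⟨e, R, rfl⟩ := List.exists_cons_of_ne_nil hE
  obtain ⟨e', R', rfl⟩ := List.exists_cons_of_ne_nil hE'
  by_cases he : 3 ≤ e
  · obtain ⟨rfl, hR', hdual'⟩ := dual_cons_of_three_le he h2 h2' hdual
    have h2₁ : ∀ x ∈ (e - 1) :: R, 2 ≤ x :=
      List.forall_mem_cons.2 ⟨by omega, (List.forall_mem_cons.1 h2).2⟩
    exact (lengthsDual_of_dual _ _ (List.cons_ne_nil _ _) hR' h2₁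
      (List.forall_mem_cons.1 h2').2 hdual').cons_two
  by_cases he' : 3 ≤ e'
  · obtain ⟨rfl, hR, hdual'⟩ := dual_cons_of_three_le he' h2' h2 (by rw [mul_comm]; exact hdual)
    have h2₁ : ∀ x ∈ (e' - 1) :: R', 2 ≤ x :=
      List.forall_mem_cons.2 ⟨by omega, (List.forall_mem_cons.1 h2').2⟩
    exact (lengthsDual_of_dual _ _ (List.cons_ne_nil _ _) hR h2₁
      (List.forall_mem_cons.1 h2).2 hdual').cons_two.symm
  obtain rfl : e = 2 := by have := h2 e List.mem_cons_self; omega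
  obtain rfl : e' = 2 := by have := h2' e' List.mem_cons_self; omega
  obtain rfl := eq_nil_of_dual_two_two h2 h2' hdual
  obtain rfl := eq_nil_of_dual_two_two h2' h2 (by rw [mul_comm]; exact hdual)
  exact ⟨rfl, rfl⟩
termination_by E.length + E'.length

theorem riemenschneider_length_general (p q : ℤ) (hq1 : 1 ≤ q) (hqp : q < p)
    (E E' : List ℤ) (hne : E ≠ []) (hne' : E' ≠ [])
    (hE : ∀ x ∈ E, 2 ≤ x) (hE' : ∀ x ∈ E', 2 ≤ x)
    (hval : hjcf (E.map (fun x : ℤ => (x : ℚ))) = (p : ℚ) / (q : ℚ))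
    (hval' : hjcf (E'.map (fun x : ℤ => (x : ℚ))) = (p : ℚ) / ((p : ℚ) - (q : ℚ))) :
    (E'.length : ℤ) = 1 + (E.map (fun x => x - 2)).sum ∧
      (E'.length : ℤ) = (3 + (E.map (fun x => x - 2)).sum) - 2 := by
  have hq : (q : ℚ) ≠ 0 := Int.cast_ne_zero.2 (by omega)
  have hpq : (p : ℚ) - q ≠ 0 := sub_ne_zero.2 (by exact_mod_cast hqp.ne')
  have hdual : (hjcfInt E - 1) * (hjcfInt E' - 1) = 1 := by
    rw [hjcfInt, hjcfInt, hval, hval']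
    field_simp
    ring
  obtain ⟨hlen, -⟩ := lengthsDual_of_dual E E' hne hne' hE hE' hdual
  exact ⟨hlen, by rw [hlen]; ring⟩

/-- Riemenschneider: if `[e_1,…,e_k] = p/q` and
`[e'_1,…,e'_{k'}] = p/(p−q)` are the dual Hirzebruch–Jung expansions, then
`k' = 1 + ∑ (e_i − 2)`; equivalently, with the embedding dimension
`e = 3 + ∑ (e_i − 2)`, one has `k' = e − 2`. -/
theorem riemenschneider_length (p q : ℤ) (hq1 : 1 ≤ q) (hqp : q < p)
    (hcop : IsCoprime p q)
    (E E' : List ℤ) (hne : E ≠ []) (hne' : E' ≠ [])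
    (hE : ∀ x ∈ E, 2 ≤ x) (hE' : ∀ x ∈ E', 2 ≤ x)
    (hval : hjcf (E.map (fun x : ℤ => (x : ℚ))) = (p : ℚ) / (q : ℚ))
    (hval' : hjcf (E'.map (fun x : ℤ => (x : ℚ))) = (p : ℚ) / ((p : ℚ) - (q : ℚ))) :
    (E'.length : ℤ) = 1 + (E.map (fun x => x - 2)).sum ∧
      (E'.length : ℤ) = (3 + (E.map (fun x => x - 2)).sum) - 2 :=
  riemenschneider_length_general p q hq1 hqp E E' hne hne' hE hE' hval hval'
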